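/- For all integers 0 ≤ k ≤ n, every field F, every β ∈ F, all y_1, y_2, … ∈ F and all pairwise distinct x_1, …, x_n ∈ F, one has 1 = Σ_{S ∈ binom([n],k)} (∏_{i∈S}(1+βx_i)^{n−k} · ∏_{j∈S̄}[x_j|y]^k) / (∏_{i∈S}∏_{j∈S̄}(x_j − x_i)), where S̄ = [n] ∖ S. -/

import Mathlib

/-!
Write `G(s)` for the sum over `k`-subsets of a finite set `s ⊆ F`. For `w ∉ s`, the quantity
`G(s ∪ {w}) · ∏_{j ∈ s} (w - j)` is a polynomial in `w` of degree at most `#s` which vanishes on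
`s`: at `a ∈ s` the subsets containing `a` cancel against those obtained by removing `a`. Hence
`G(s ∪ {w})` does not depend on `w ∉ s`. For `β ≠ 0` we take `w = -1/β`: the subsets containing
`w` contribute nothing, since `1 + βw = 0`, and the others reduce to the terms of `G(s)`, so
induction on `#s` applies. For `β = 0` the common value is the leading coefficient of that
polynomial, which is again `G(s)`.
-/

/-- `[x|y]^j = (x ⊕ y_1)⋯(x ⊕ y_j)` where `a ⊕ b = a + b + βab`; `y t` is `y_{t+1}`. -/
def fpow {F : Type*} [Field F] (β : F) (y : ℕ → F) (x : F) (j : ℕ) : F :=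
  ∏ t ∈ Finset.range j, (x + y t + β * x * y t)

open Finset Polynomial

section GoodSum

variable {F : Type*} [Field F] {f g : F → F}

def splitWeight (f g : F → F) (T U : Finset F) : F :=
  (∏ i ∈ T, f i) * (∏ j ∈ U, g j) / ∏ i ∈ T, ∏ j ∈ U, (j - i)

theorem splitWeight_mul_left (h : F → F) (T U : Finset F) :
    splitWeight (fun x => h x * f x) g T U = (∏ i ∈ T, h i) * splitWeight f g T U := by
  simp only [splitWeight, prod_mul_distrib]
  ring

theorem prod_sub_ne_zero {s : Finset F} {w : F} (hw : w ∉ s) : ∏ j ∈ s, (w - j) ≠ 0 :=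
  prod_ne_zero_iff.mpr fun _ hj => sub_ne_zero.mpr fun h => hw (h ▸ hj)

theorem prod_sub_ne_zero' {s : Finset F} {w : F} (hw : w ∉ s) : ∏ j ∈ s, (j - w) ≠ 0 :=
  prod_ne_zero_iff.mpr fun _ hj => sub_ne_zero.mpr fun h => hw (h ▸ hj)

theorem prod_sub_swap (s : Finset F) (w : F) :
    ∏ j ∈ s, (w - j) = (-1) ^ #s * ∏ j ∈ s, (j - w) := by
  simp only [← prod_neg, neg_sub]

variable [DecidableEq F]

theorem splitWeight_insert_left {T : Finset F} (U : Finset F) {a : F}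
    (ha : a ∉ T) :
    splitWeight f g (insert a T) U = splitWeight f g T U * f a / ∏ j ∈ U, (j - a) := by
  simp only [splitWeight, prod_insert ha]
  ring

theorem splitWeight_insert_right (T : Finset F) {U : Finset F} {a : F}
    (ha : a ∉ U) :
    splitWeight f g T (insert a U) = splitWeight f g T U * g a / ∏ i ∈ T, (a - i) := by
  simp only [splitWeight, prod_insert ha, prod_mul_distrib]
  ring

theorem splitWeight_insert_add_insert_eq_zero {A U : Finset F} {a : F} (haA : a ∉ A)
    (haU : a ∉ U) :
    splitWeight f g (insert a A) U * (g a * ∏ j ∈ U, (a - j)) +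
      (-1) ^ (#U + 1) * splitWeight f g A (insert a U) * (f a * ∏ i ∈ A, (a - i)) = 0 := by
  rw [splitWeight_insert_left _ haA, splitWeight_insert_right _ haU, prod_sub_swap U]
  have := prod_sub_ne_zero' haU
  have := prod_sub_ne_zero haA
  field_simp
  ring

def goodSum (f g : F → F) (s : Finset F) (k : ℕ) : F :=
  ∑ T ∈ s.powersetCard k, splitWeight f g T (s \ T)

theorem goodSum_zero (s : Finset F) : goodSum f g s 0 = ∏ j ∈ s, g j := by
  simp [goodSum, splitWeight]

theorem goodSum_card (s : Finset F) : goodSum f g s #s = ∏ i ∈ s, f i := by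
  simp [goodSum, splitWeight, powersetCard_self]

theorem goodSum_insert {s : Finset F} {w : F} (hw : w ∉ s) (k : ℕ) :
    goodSum f g (insert w s) (k + 1) =
      ∑ T ∈ s.powersetCard (k + 1), splitWeight f g T (s \ T) * g w / ∏ i ∈ T, (w - i) +
        ∑ A ∈ s.powersetCard k, splitWeight f g A (s \ A) * f w / ∏ j ∈ s \ A, (j - w) := by
  have hwA {A : Finset F} (hA : A ∈ s.powersetCard k) : w ∉ A :=
    fun h => hw ((mem_powersetCard.mp hA).1 h)
  rw [goodSum, powersetCard_succ_insert hw, sum_union, sum_image]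
  · congr 1
    · refine sum_congr rfl fun T hT => ?_
      rw [insert_sdiff_of_notMem _ fun h => hw ((mem_powersetCard.mp hT).1 h),
        splitWeight_insert_right _ fun h => hw (mem_sdiff.mp h).1]
    · refine sum_congr rfl fun A hA => ?_
      rw [insert_sdiff_insert, sdiff_insert_of_notMem hw, splitWeight_insert_left _ (hwA hA)]
  · intro A hA B hB hAB
    rw [← erase_insert (hwA hA), ← erase_insert (hwA hB), hAB]
  · simp only [disjoint_left, mem_image, not_exists, not_and]
    intro T hT A _ hAT
    exact hw ((mem_powersetCard.mp hT).1 (hAT ▸ mem_insert_self w A))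

end GoodSum

open Lagrange in
theorem Polynomial.eq_C_coeff_mul_nodal {F : Type*} [Field F] {φ : F[X]} {s : Finset F}
    (hdeg : φ.natDegree ≤ #s) (hzero : ∀ a ∈ s, φ.eval a = 0) :
    φ = C (φ.coeff #s) * nodal s id := by
  refine eq_of_degree_sub_lt_of_eval_finset_eq s ?_ fun a ha => ?_
  · rw [degree_lt_iff_coeff_zero]
    intro m hm
    rw [coeff_sub, coeff_C_mul]
    rcases hm.eq_or_lt with rfl | hlt
    · rw [← natDegree_nodal (s := s) (v := id), nodal_monic.coeff_natDegree, mul_one, sub_self]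
    · rw [coeff_eq_zero_of_natDegree_lt (hdeg.trans_lt hlt),
        coeff_eq_zero_of_natDegree_lt (p := nodal s id) (by rwa [natDegree_nodal]), mul_zero,
        sub_zero]
  · rw [eval_mul, hzero a ha, show (nodal s id).eval a = 0 from eval_nodal_at_node (v := id) ha,
      mul_zero]

section GoodPoly

open Lagrange

variable {F : Type*} [Field F] [DecidableEq F]

noncomputable def goodPoly (p q : F[X]) (s : Finset F) (k : ℕ) : F[X] :=
  ∑ T ∈ s.powersetCard (k + 1), C (splitWeight p.eval q.eval T (s \ T)) * (q * nodal (s \ T) id) +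
    ∑ A ∈ s.powersetCard k,
      C ((-1) ^ (#s - k) * splitWeight p.eval q.eval A (s \ A)) * (p * nodal A id)

variable (p q : F[X]) {s : Finset F} {k : ℕ}

theorem eval_goodPoly_of_notMem {w : F} (hw : w ∉ s) :
    (goodPoly p q s k).eval w = goodSum p.eval q.eval (insert w s) (k + 1) * ∏ j ∈ s, (w - j) := by
  rw [goodSum_insert hw, add_mul, sum_mul, sum_mul, goodPoly, eval_add, eval_finsetSum,
    eval_finsetSum]
  congr 1
  · refine sum_congr rfl fun T hT => ?_
    have hTs := (mem_powersetCard.mp hT).1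
    have hwT := prod_sub_ne_zero fun h => hw (hTs h)
    rw [← prod_sdiff hTs]
    simp only [eval_mul, eval_C, eval_nodal, id]
    field_simp
  · refine sum_congr rfl fun A hA => ?_
    obtain ⟨hAs, hAk⟩ := mem_powersetCard.mp hA
    have hwA := prod_sub_ne_zero' (s := s \ A) fun h => hw (mem_sdiff.mp h).1
    rw [← prod_sdiff hAs, prod_sub_swap (s \ A), card_sdiff_of_subset hAs, hAk]
    simp only [eval_mul, eval_C, eval_nodal, id]
    field_simp

theorem eval_goodPoly_of_mem {a : F} (ha : a ∈ s) : (goodPoly p q s k).eval a = 0 := by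
  rw [goodPoly, eval_add, eval_finsetSum, eval_finsetSum,
    ← sum_filter_of_ne (s := s.powersetCard (k + 1)) (p := (a ∈ ·)),
    ← sum_filter_of_ne (s := s.powersetCard k) (p := (a ∉ ·)),
    ← sum_nbij' (s := (s.powersetCard k).filter (a ∉ ·)) (insert a) (erase · a) ?_ ?_ ?_ ?_
      fun _ _ => rfl, ← sum_add_distrib]
  · refine sum_eq_zero fun A hA => ?_
    obtain ⟨hA, haA⟩ := mem_filter.mp hA
    obtain ⟨hAs, hAk⟩ := mem_powersetCard.mp hA
    have haU : a ∉ s \ insert a A := fun h => (mem_sdiff.mp h).2 (mem_insert_self a A)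
    have hsA : s \ A = insert a (s \ insert a A) := by
      rw [sdiff_insert, insert_erase (mem_sdiff.mpr ⟨ha, haA⟩)]
    have hcard : #s - k = #(s \ insert a A) + 1 := by
      have hsub := insert_subset ha hAs
      have := card_le_card hsub
      rw [card_sdiff_of_subset hsub, card_insert_of_notMem haA] at *
      omega
    simp only [eval_mul, eval_C, eval_nodal, id]
    rw [hsA, hcard]
    exact splitWeight_insert_add_insert_eq_zero haA haU
  · intro A hA
    simp only [mem_filter, mem_powersetCard] at hA ⊢
    grind [card_insert_of_notMem]
  · intro T hT
    simp only [mem_filter, mem_powersetCard] at hT ⊢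
    grind [card_erase_of_mem]
  · exact fun A hA => erase_insert (mem_filter.mp hA).2
  · exact fun T hT => insert_erase (mem_filter.mp hT).2
  · intro A _ h haA
    simp [eval_nodal, prod_eq_zero haA] at h
  · intro T _ h
    by_contra haT
    simp [eval_nodal, prod_eq_zero (mem_sdiff.mpr ⟨ha, haT⟩)] at h

variable {p q}

theorem natDegree_goodPoly_le (hq : q.natDegree ≤ k + 1) (hp : p.natDegree + k ≤ #s) :
    (goodPoly p q s k).natDegree ≤ #s := by
  refine (natDegree_add_le _ _).trans (max_le ?_ ?_) <;>
    refine natDegree_sum_le_of_forall_le _ _ fun T hT => (natDegree_C_mul_le _ _).trans <|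
      natDegree_mul_le.trans ?_ <;>
    obtain ⟨hTs, hTk⟩ := mem_powersetCard.mp hT <;>
    rw [natDegree_nodal]
  · rw [card_sdiff_of_subset hTs]
    have := card_le_card hTs
    omega
  · omega

theorem coeff_goodPoly (hq : q.Monic) (hqk : q.natDegree = k + 1) (hp : p.natDegree + k < #s) :
    (goodPoly p q s k).coeff #s = goodSum p.eval q.eval s (k + 1) := by
  rw [goodPoly, coeff_add, finsetSum_coeff, finsetSum_coeff, goodSum,
    sum_eq_zero (s := s.powersetCard k), add_zero]
  · refine sum_congr rfl fun T hT => ?_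
    obtain ⟨hTs, hTk⟩ := mem_powersetCard.mp hT
    have hmonic : (q * nodal (s \ T) id).Monic := hq.mul nodal_monic
    have hdeg : (q * nodal (s \ T) id).natDegree = #s := by
      rw [hq.natDegree_mul nodal_monic, natDegree_nodal, card_sdiff_of_subset hTs]
      omega
    rw [coeff_C_mul, ← hdeg, hmonic.coeff_natDegree, mul_one]
  · intro A hA
    rw [coeff_C_mul, coeff_eq_zero_of_natDegree_lt, mul_zero]
    refine natDegree_mul_le.trans_lt ?_
    rw [natDegree_nodal, (mem_powersetCard.mp hA).2]
    exact hp

theorem goodSum_insert_eq_coeff (hq : q.natDegree ≤ k + 1) (hp : p.natDegree + k ≤ #s) {w : F}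
    (hw : w ∉ s) : goodSum p.eval q.eval (insert w s) (k + 1) = (goodPoly p q s k).coeff #s := by
  have h := eval_goodPoly_of_notMem p q (k := k) hw
  rw [eq_C_coeff_mul_nodal (natDegree_goodPoly_le hq hp) fun a ha => eval_goodPoly_of_mem p q ha,
    eval_mul, eval_C, eval_nodal] at h
  exact (mul_right_cancel₀ (prod_sub_ne_zero hw) h).symm

end GoodPoly

theorem Finset.exists_mem_notMem_erase {α : Type*} [DecidableEq α] {s : Finset α}
    (hs : s.Nonempty) (z : α) : ∃ w ∈ s, z ∉ s.erase w := by
  by_cases hz : z ∈ s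
  · exact ⟨z, hz, notMem_erase z s⟩
  · obtain ⟨w, hw⟩ := hs
    exact ⟨w, hw, fun h => hz (mem_of_mem_erase h)⟩

section Fpow

variable {F : Type*} [Field F] (β : F) (y : ℕ → F)

noncomputable def fpowPoly (k : ℕ) : F[X] := ∏ t ∈ range k, (C (1 + β * y t) * X + C (y t))

theorem eval_fpowPoly (k : ℕ) (x : F) : (fpowPoly β y k).eval x = fpow β y x k := by
  simp only [fpowPoly, fpow, eval_prod, eval_add, eval_mul, eval_C, eval_X]
  exact prod_congr rfl fun t _ => by ring

theorem natDegree_fpowPoly_le (k : ℕ) : (fpowPoly β y k).natDegree ≤ k :=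
  (natDegree_prod_le _ _).trans <| (sum_le_sum fun _ _ => natDegree_linear_le).trans (by simp)

theorem fpowPoly_zero (k : ℕ) : fpowPoly 0 y k = ∏ t ∈ range k, (X + C (y t)) := by
  simp [fpowPoly]

theorem monic_fpowPoly_zero (k : ℕ) : (fpowPoly 0 y k).Monic := by
  rw [fpowPoly_zero]
  exact monic_prod_of_monic _ _ fun t _ => monic_X_add_C (y t)

theorem natDegree_fpowPoly_zero (k : ℕ) : (fpowPoly 0 y k).natDegree = k := by
  rw [fpowPoly_zero, natDegree_prod_of_monic _ _ fun t _ => monic_X_add_C (y t)]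
  simp

theorem fpow_neg_inv {β : F} (hβ : β ≠ 0) (k : ℕ) : fpow β y (-β⁻¹) k = (-β⁻¹) ^ k := by
  rw [fpow, prod_congr rfl fun t _ => ?_, prod_const, card_range]
  field_simp
  ring

variable [DecidableEq F]

theorem goodSum_insert_eq_insert {s : Finset F} {e k : ℕ} (hs : #s = e + k) {w z : F}
    (hw : w ∉ s) (hz : z ∉ s) :
    goodSum (fun x => (1 + β * x) ^ e) (fun x => fpow β y x (k + 1)) (insert w s) (k + 1) =
      goodSum (fun x => (1 + β * x) ^ e) (fun x => fpow β y x (k + 1)) (insert z s) (k + 1) := by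
  have hp : ((1 + C β * X : F[X]) ^ e).natDegree + k ≤ #s := by
    rw [hs]
    exact Nat.add_le_add_right (by compute_degree) k
  have key {v : F} (hv : v ∉ s) :=
    goodSum_insert_eq_coeff (natDegree_fpowPoly_le β y (k + 1)) hp hv
  simp only [eval_pow, eval_add, eval_one, eval_mul, eval_C, eval_X, eval_fpowPoly] at key
  rw [key hw, key hz]

theorem goodSum_one_insert {s : Finset F} {k : ℕ} (hk : k < #s) {w : F} (hw : w ∉ s) :
    goodSum (fun _ => 1) (fun x => fpow 0 y x (k + 1)) (insert w s) (k + 1) =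
      goodSum (fun _ => 1) (fun x => fpow 0 y x (k + 1)) s (k + 1) := by
  have h := goodSum_insert_eq_coeff (p := 1) (natDegree_fpowPoly_le 0 y (k + 1))
    (by simpa using hk.le) hw
  rw [coeff_goodPoly (monic_fpowPoly_zero y (k + 1)) (natDegree_fpowPoly_zero y (k + 1))
    (by simpa using hk)] at h
  simpa only [eval_one, eval_fpowPoly] using h

theorem goodSum_insert_neg_inv {β : F} (hβ : β ≠ 0) {s : Finset F} (hs : -β⁻¹ ∉ s) (e k : ℕ) :
    goodSum (fun x => (1 + β * x) ^ (e + 1)) (fun x => fpow β y x (k + 1)) (insert (-β⁻¹) s)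
        (k + 1) =
      goodSum (fun x => (1 + β * x) ^ e) (fun x => fpow β y x (k + 1)) s (k + 1) := by
  have hroot : 1 + β * -β⁻¹ = 0 := by rw [mul_neg, mul_inv_cancel₀ hβ, add_neg_cancel]
  rw [goodSum_insert hs]
  simp only [hroot, zero_pow e.succ_ne_zero, mul_zero, zero_div, sum_const_zero, add_zero]
  refine sum_congr rfl fun T hT => ?_
  obtain ⟨hTs, hTk⟩ := mem_powersetCard.mp hT
  have hT1 : ∏ i ∈ T, (1 + β * i) ≠ 0 := prod_ne_zero_iff.mpr fun i hi h => hs <| by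
    convert hTs hi
    field_simp
    linear_combination -h
  have hfac : ∏ i ∈ T, (-β⁻¹ - i) = (-β⁻¹) ^ (k + 1) * ∏ i ∈ T, (1 + β * i) := by
    rw [← hTk, ← prod_const, ← prod_mul_distrib]
    refine prod_congr rfl fun i _ => ?_
    field_simp
    ring
  simp only [pow_succ', splitWeight_mul_left (fun x => 1 + β * x)]
  rw [fpow_neg_inv y hβ, hfac]
  rw [div_eq_iff (mul_ne_zero (pow_ne_zero _ (neg_ne_zero.mpr (inv_ne_zero hβ))) hT1)]
  ring

theorem goodSum_eq_one (s : Finset F) {e k : ℕ} (hs : #s = e + k) :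
    goodSum (fun x => (1 + β * x) ^ e) (fun x => fpow β y x k) s k = 1 := by
  induction s using Finset.strongInduction generalizing e k with
  | H s ih =>
  rcases k with _ | k
  · simp [goodSum_zero, fpow]
  rcases e with _ | e
  · rw [zero_add] at hs
    rw [← hs, goodSum_card]
    simp
  obtain ⟨w, hw, hzw⟩ := s.exists_mem_notMem_erase (card_pos.mp (by omega)) (-β⁻¹)
  have ht : #(s.erase w) = e + (k + 1) := by rw [card_erase_of_mem hw]; omega
  have ih' := ih _ (erase_ssubset hw) ht
  rw [← insert_erase hw]
  by_cases hβ : β = 0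
  · subst hβ
    simp only [zero_mul, add_zero, one_pow] at ih' ⊢
    rw [goodSum_one_insert y (by omega) (notMem_erase w s), ih']
  · rw [goodSum_insert_eq_insert β y (by omega) (notMem_erase w s) hzw,
      goodSum_insert_neg_inv y hβ hzw, ih']

end Fpow

theorem sum_powersetCard_eq_goodSum {F ι : Type*} [Field F] [DecidableEq F] [Fintype ι]
    [DecidableEq ι] {x : ι → F} (hx : Function.Injective x) (f g : F → F) (k : ℕ) :
    ∑ S : {S : Finset ι // #S = k},
        (∏ i ∈ S.1, f (x i)) * (∏ j ∈ S.1ᶜ, g (x j)) / ∏ i ∈ S.1, ∏ j ∈ S.1ᶜ, (x j - x i) =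
      goodSum f g (univ.map ⟨x, hx⟩) k := by
  rw [goodSum, powersetCard_map, sum_map,
    sum_subtype (powersetCard k (univ : Finset ι)) fun _ => mem_powersetCard_univ]
  refine Fintype.sum_congr _ _ fun S => ?_
  simp only [compl_eq_univ_sdiff, splitWeight, RelEmbedding.coe_toEmbedding, mapEmbedding_apply,
    prod_map, Function.Embedding.coeFn_mk, ← Finset.map_sdiff]

/-- Another generalization of Good's identity:
`1 = Σ_{S ∈ binom([n],k)} (∏_{i∈S}(1+βx_i)^{n−k} ∏_{j∈S̄}[x_j|y]^k) / ∏_{i∈S}∏_{j∈S̄}(x_j − x_i)`. -/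
theorem stmt6 {F : Type*} [Field F] (n k : ℕ) (hkn : k ≤ n) (β : F) (y : ℕ → F)
    (x : Fin n → F) (hx : Function.Injective x) :
    (1 : F) = ∑ S : {S : Finset (Fin n) // S.card = k},
        (∏ i ∈ S.1, (1 + β * x i) ^ (n - k)) * (∏ j ∈ S.1ᶜ, fpow β y (x j) k)
          / ∏ i ∈ S.1, ∏ j ∈ S.1ᶜ, (x j - x i) := by
  classical
  have hcard : #(univ.map ⟨x, hx⟩) = (n - k) + k := by simp [hkn]
  rw [sum_powersetCard_eq_goodSum hx (fun z => (1 + β * z) ^ (n - k)) (fun z => fpow β y z k),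
    goodSum_eq_one β y _ hcard]
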